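/- arXiv:1706.05638 — 2 statements merged into one kernel-verified Lean document; each statement's English description precedes it below -/
import Mathlib

section
/- Let τ > 0, let α̂ ≤ 0 be a real number, let a : [0,∞) → ℝ be locally integrable with a(s) ≥ α̂ for all s ≥ 0, and let Γ : [−τ, ∞) → ℝⁿ be continuous. Then for every t ≥ 0: exp(−∫_0^t a(s) ds) · sup_{θ ∈ [−τ,0]} |Γ(t+θ)|² ≤ e^{−α̂·τ} · ( sup_{θ ∈ [−τ,0]} |Γ(θ)|² + sup_{s ∈ [max(t−τ,0), t]} exp(−∫_0^s a(r) dr)·|Γ(s)|² ). -/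
/-!
Write `f = ‖Γ‖²`, `c = α̂`, `w s = exp (-∫₀ˢ a)` and `s = t + θ`. If `s ≤ 0`, the point lies in
the initial segment and `t ≤ τ`, so `w t ≤ e^{-cτ}` because `a ≥ c` and `c ≤ 0`. If `s ≥ 0`, then
`w t · f s = exp (-∫ₛᵗ a) · (w s · f s)` with `t - s ≤ τ`, and the same estimate bounds the first
factor. Suprema are real `⨆`, so bounding them needs no nonemptiness, only nonnegativity.
-/

open Set MeasureTheory intervalIntegral Real

theorem mul_sub_le_intervalIntegral {a : ℝ → ℝ} {c u v : ℝ} (huv : u ≤ v)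
    (ha_int : IntervalIntegrable a volume u v) (ha : ∀ x ∈ Icc u v, c ≤ a x) :
    c * (v - u) ≤ ∫ x in u..v, a x := by
  simpa [mul_comm] using integral_mono_on huv intervalIntegrable_const ha_int ha

theorem exp_neg_intervalIntegral_le {a : ℝ → ℝ} {c τ u v : ℝ} (hc : c ≤ 0) (huv : u ≤ v)
    (hvu : v - u ≤ τ) (ha_int : IntervalIntegrable a volume u v)
    (ha : ∀ x ∈ Icc u v, c ≤ a x) :
    exp (-∫ x in u..v, a x) ≤ exp (-(c * τ)) := by
  have := mul_sub_le_intervalIntegral huv ha_int ha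
  gcongr
  nlinarith

theorem ContinuousOn.bddAbove_range_Icc {f : ℝ → ℝ} {u v : ℝ} (hf : ContinuousOn f (Icc u v)) :
    BddAbove (range fun x : Icc u v => f x) := by
  rw [← image_eq_range]
  exact isCompact_Icc.bddAbove_image hf

section WeightedSup

variable {a f : ℝ → ℝ} {c τ t : ℝ}

theorem intervalIntegrable_of_forall_zero
    (ha_int : ∀ t, 0 ≤ t → IntervalIntegrable a volume 0 t)
    {s : ℝ} (hs : 0 ≤ s) (hst : s ≤ t) : IntervalIntegrable a volume s t :=
  (ha_int t (hs.trans hst)).mono_set <| by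
    rw [uIcc_of_le hst, uIcc_of_le (hs.trans hst)]
    exact Icc_subset_Icc hs le_rfl

theorem exp_neg_integral_eq_mul {s : ℝ} (h0s : IntervalIntegrable a volume 0 s)
    (hst : IntervalIntegrable a volume s t) :
    exp (-∫ r in (0 : ℝ)..t, a r) = exp (-∫ r in s..t, a r) * exp (-∫ r in (0 : ℝ)..s, a r) := by
  rw [← integral_add_adjacent_intervals h0s hst, ← exp_add]
  ring_nf

theorem bddAbove_range_exp_neg_integral_mul
    (ha_int : ∀ t, 0 ≤ t → IntervalIntegrable a volume 0 t) (hf : ContinuousOn f (Ici (-τ)))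
    (ht : 0 ≤ t) :
    BddAbove (range fun s : Icc (max (t - τ) 0) t =>
      exp (-∫ r in (0 : ℝ)..(s : ℝ), a r) * f s) := by
  refine ContinuousOn.bddAbove_range_Icc
    (f := fun s ↦ exp (-∫ r in (0 : ℝ)..s, a r) * f s) (ContinuousOn.mul ?_ ?_)
  · have hprim := continuousOn_primitive_interval' (ha_int t ht) left_mem_uIcc
    rw [uIcc_of_le ht] at hprim
    exact (hprim.mono (Icc_subset_Icc (le_max_right _ _) le_rfl)).neg.rexp
  · exact hf.mono fun x hx ↦ show -τ ≤ x by linarith [hx.1, le_max_left (t - τ) 0]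

theorem exp_neg_integral_mul_le_of_mem_Icc (hc : c ≤ 0)
    (ha_int : ∀ t, 0 ≤ t → IntervalIntegrable a volume 0 t) (ha : ∀ s, 0 ≤ s → c ≤ a s)
    (hf_nonneg : ∀ x, 0 ≤ f x) (hf : ContinuousOn f (Ici (-τ))) (ht : 0 ≤ t)
    {θ : ℝ} (hθ : θ ∈ Icc (-τ) 0) :
    exp (-∫ s in (0 : ℝ)..t, a s) * f (t + θ)
      ≤ exp (-(c * τ)) * ((⨆ θ : Icc (-τ) (0 : ℝ), f θ)
          + ⨆ s : Icc (max (t - τ) 0) t, exp (-∫ r in (0 : ℝ)..(s : ℝ), a r) * f s) := by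
  obtain ⟨hθτ, hθ0⟩ := hθ
  have hM₁ : 0 ≤ ⨆ θ : Icc (-τ) (0 : ℝ), f θ := Real.iSup_nonneg fun _ ↦ hf_nonneg _
  have hM₂ : 0 ≤ ⨆ s : Icc (max (t - τ) 0) t, exp (-∫ r in (0 : ℝ)..(s : ℝ), a r) * f s :=
    Real.iSup_nonneg fun _ ↦ mul_nonneg (exp_pos _).le (hf_nonneg _)
  rcases le_total (t + θ) 0 with hs | hs
  · have hw : exp (-∫ s in (0 : ℝ)..t, a s) ≤ exp (-(c * τ)) :=
      exp_neg_intervalIntegral_le hc ht (by linarith) (ha_int t ht) fun x hx ↦ ha x hx.1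
    have hbdd : BddAbove (range fun θ : Icc (-τ) (0 : ℝ) => f θ) :=
      (hf.mono Icc_subset_Ici_self).bddAbove_range_Icc
    have hf_le : f (t + θ) ≤ ⨆ θ : Icc (-τ) (0 : ℝ), f θ :=
      le_ciSup hbdd ⟨t + θ, by linarith, hs⟩
    calc exp (-∫ s in (0 : ℝ)..t, a s) * f (t + θ)
        ≤ exp (-(c * τ)) * ⨆ θ : Icc (-τ) (0 : ℝ), f θ :=
          mul_le_mul hw hf_le (hf_nonneg _) (exp_pos _).le
      _ ≤ _ := by gcongr; linarith
  · set s := t + θ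
    have hst : s ≤ t := by linarith
    have hint_st : IntervalIntegrable a volume s t :=
      intervalIntegrable_of_forall_zero ha_int hs hst
    have hw : exp (-∫ r in s..t, a r) ≤ exp (-(c * τ)) :=
      exp_neg_intervalIntegral_le hc hst (by linarith) hint_st fun x hx ↦ ha x (hs.trans hx.1)
    have hwf_le : exp (-∫ r in (0 : ℝ)..s, a r) * f s
        ≤ ⨆ s : Icc (max (t - τ) 0) t, exp (-∫ r in (0 : ℝ)..(s : ℝ), a r) * f s :=
      le_ciSup (bddAbove_range_exp_neg_integral_mul ha_int hf ht) ⟨s, max_le (by linarith) hs, hst⟩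
    calc exp (-∫ r in (0 : ℝ)..t, a r) * f s
        = exp (-∫ r in s..t, a r) * (exp (-∫ r in (0 : ℝ)..s, a r) * f s) := by
          rw [exp_neg_integral_eq_mul (ha_int s hs) hint_st, mul_assoc]
      _ ≤ exp (-(c * τ)) * ⨆ s : Icc (max (t - τ) 0) t,
            exp (-∫ r in (0 : ℝ)..(s : ℝ), a r) * f s :=
          mul_le_mul hw hwf_le (mul_nonneg (exp_pos _).le (hf_nonneg s)) (exp_pos _).le
      _ ≤ _ := by gcongr; linarith

theorem exp_neg_integral_mul_iSup_le (hc : c ≤ 0)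
    (ha_int : ∀ t, 0 ≤ t → IntervalIntegrable a volume 0 t) (ha : ∀ s, 0 ≤ s → c ≤ a s)
    (hf_nonneg : ∀ x, 0 ≤ f x) (hf : ContinuousOn f (Ici (-τ))) (ht : 0 ≤ t) :
    exp (-∫ s in (0 : ℝ)..t, a s) * (⨆ θ : Icc (-τ) (0 : ℝ), f (t + θ))
      ≤ exp (-(c * τ)) * ((⨆ θ : Icc (-τ) (0 : ℝ), f θ)
          + ⨆ s : Icc (max (t - τ) 0) t, exp (-∫ r in (0 : ℝ)..(s : ℝ), a r) * f s) := by
  rw [Real.mul_iSup_of_nonneg (exp_pos _).le]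
  refine Real.iSup_le (fun θ ↦ exp_neg_integral_mul_le_of_mem_Icc hc ha_int ha hf_nonneg hf ht θ.2)
    (mul_nonneg (exp_pos _).le (add_nonneg ?_ ?_))
  · exact Real.iSup_nonneg fun _ ↦ hf_nonneg _
  · exact Real.iSup_nonneg fun _ ↦ mul_nonneg (exp_pos _).le (hf_nonneg _)

end WeightedSup

theorem stmt_8_general (n : ℕ) (τ : ℝ) (alphaHat : ℝ) (halphaHat : alphaHat ≤ 0)
    (a : ℝ → ℝ)
    (ha_int : ∀ t : ℝ, 0 ≤ t → IntervalIntegrable a MeasureTheory.volume 0 t)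
    (ha : ∀ s : ℝ, 0 ≤ s → alphaHat ≤ a s)
    (Γ : ℝ → EuclideanSpace ℝ (Fin n))
    (hΓ : ContinuousOn Γ (Set.Ici (-τ)))
    (t : ℝ) (ht : 0 ≤ t) :
    Real.exp (-∫ s in (0 : ℝ)..t, a s)
        * (⨆ θ : Set.Icc (-τ) (0 : ℝ), ‖Γ (t + (θ : ℝ))‖ ^ 2)
      ≤ Real.exp (-(alphaHat * τ))
        * ((⨆ θ : Set.Icc (-τ) (0 : ℝ), ‖Γ (θ : ℝ)‖ ^ 2)
          + ⨆ s : Set.Icc (max (t - τ) 0) t,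
              Real.exp (-∫ r in (0 : ℝ)..(s : ℝ), a r) * ‖Γ (s : ℝ)‖ ^ 2) :=
  exp_neg_integral_mul_iSup_le halphaHat ha_int ha (f := fun x ↦ ‖Γ x‖ ^ 2)
    (fun _ ↦ sq_nonneg _) (hΓ.norm.pow 2) ht

/-- Weighted-supremum inequality for the segment process: for τ > 0, alphaHat ≤ 0,
a locally integrable with a ≥ alphaHat on [0,∞), and Γ continuous on [−τ,∞),
for every t ≥ 0,
exp(−∫_0^t a)·sup_{θ∈[−τ,0]} |Γ(t+θ)|² ≤
  e^{−alphaHatτ}·(sup_{θ∈[−τ,0]} |Γ(θ)|² + sup_{s∈[max(t−τ,0),t]} exp(−∫_0^s a)·|Γ(s)|²). -/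
theorem stmt_8 (n : ℕ) (τ : ℝ) (hτ : 0 < τ) (alphaHat : ℝ) (halphaHat : alphaHat ≤ 0)
    (a : ℝ → ℝ)
    (ha_int : ∀ t : ℝ, 0 ≤ t → IntervalIntegrable a MeasureTheory.volume 0 t)
    (ha : ∀ s : ℝ, 0 ≤ s → alphaHat ≤ a s)
    (Γ : ℝ → EuclideanSpace ℝ (Fin n))
    (hΓ : ContinuousOn Γ (Set.Ici (-τ)))
    (t : ℝ) (ht : 0 ≤ t) :
    Real.exp (-∫ s in (0 : ℝ)..t, a s)
        * (⨆ θ : Set.Icc (-τ) (0 : ℝ), ‖Γ (t + (θ : ℝ))‖ ^ 2)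
      ≤ Real.exp (-(alphaHat * τ))
        * ((⨆ θ : Set.Icc (-τ) (0 : ℝ), ‖Γ (θ : ℝ)‖ ^ 2)
          + ⨆ s : Set.Icc (max (t - τ) 0) t,
              Real.exp (-∫ r in (0 : ℝ)..(s : ℝ), a r) * ‖Γ (s : ℝ)‖ ^ 2) :=
  stmt_8_general n τ alphaHat halphaHat a ha_int ha Γ hΓ t ht
end

section
/- Let τ > 0, let v be a Borel probability measure on [−τ, 0], let α̂ ∈ ℝ and β̌ ≥ 0, and let a, β : ℝ → ℝ be measurable functions, integrable on compact intervals, with a(r) ≥ α̂ for all r and 0 ≤ β(r) ≤ β̌ for all r. Then for every t ≥ 0: ∫_0^t ∫_{[−τ,0]} β(s−θ)·exp(−∫_s^{s−θ} a(r) dr) v(dθ) ds ≤ τ·β̌·e^{|α̂|·τ} + ( ∫_{[−τ,0]} e^{α̂·θ} v(dθ) ) · ∫_0^t β(s) ds. -/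
open MeasureTheory Set Function

/-!
For `θ ∈ [-τ, 0]` the lower bound `a ≥ α̂` gives `exp (-∫_s^{s-θ} a) ≤ e^{α̂ θ}`, which
decouples the kernel into `b (s - θ) e^{α̂ θ}`. After exchanging the integrals, the shifted
integral `∫_0^t b (s - θ) ds = ∫_{-θ}^{t-θ} b` exceeds `∫_0^t b` by at most the tail
`∫_t^{t-θ} b ≤ τ β̌`, and this tail is weighted by `∫ e^{α̂ θ} v(dθ) ≤ e^{|α̂| τ}`.
-/

theorem intervalIntegral_mono_of_nonneg {f g : ℝ → ℝ} {a b : ℝ} (hab : a ≤ b) (hf : 0 ≤ f)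
    (hg : IntervalIntegrable g volume a b) (hfg : f ≤ g) :
    ∫ x in a..b, f x ≤ ∫ x in a..b, g x := by
  rw [intervalIntegral.integral_of_le hab, intervalIntegral.integral_of_le hab]
  exact integral_mono_of_nonneg (.of_forall hf) hg.1 (.of_forall hfg)

theorem exp_neg_integral_le_exp_mul {a : ℝ → ℝ} {α s θ : ℝ} (hθ : θ ≤ 0)
    (ha_int : IntervalIntegrable a volume s (s - θ)) (ha : ∀ r, α ≤ a r) :
    Real.exp (-∫ r in s..(s - θ), a r) ≤ Real.exp (α * θ) := by
  have h := intervalIntegral.integral_mono_on (by linarith) intervalIntegrable_const ha_int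
    fun r _ => ha r
  rw [intervalIntegral.integral_const, smul_eq_mul, sub_sub_cancel_left] at h
  exact Real.exp_le_exp.2 (by linarith)

theorem exp_mul_le_exp_abs_mul {α τ θ : ℝ} (hθ : θ ∈ Icc (-τ) 0) :
    Real.exp (α * θ) ≤ Real.exp (|α| * τ) := by
  refine Real.exp_le_exp.2 ((le_abs_self _).trans ?_)
  rw [abs_mul]
  exact mul_le_mul_of_nonneg_left (abs_le.2 ⟨hθ.1, by linarith [hθ.1, hθ.2]⟩) (abs_nonneg α)

theorem integral_exp_mul_le {v : Measure ℝ} [IsProbabilityMeasure v] {α τ : ℝ}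
    (hv : ∀ᵐ θ ∂v, θ ∈ Icc (-τ) 0) :
    ∫ θ, Real.exp (α * θ) ∂v ≤ Real.exp (|α| * τ) :=
  calc ∫ θ, Real.exp (α * θ) ∂v ≤ ∫ _, Real.exp (|α| * τ) ∂v :=
        integral_mono_of_nonneg (.of_forall fun θ => (Real.exp_pos _).le) (integrable_const _)
          (hv.mono fun _ hθ => exp_mul_le_exp_abs_mul hθ)
    _ = Real.exp (|α| * τ) := by simp

theorem intervalIntegral_comp_sub_le {b : ℝ → ℝ} {β t θ : ℝ}
    (hb_int : ∀ x y, IntervalIntegrable b volume x y) (hb0 : ∀ r, 0 ≤ b r)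
    (hbβ : ∀ r, b r ≤ β) (hθ : θ ≤ 0) :
    ∫ s in 0..t, b (s - θ) ≤ -θ * β + ∫ s in 0..t, b s := by
  have hhead : ∫ u in -θ..0, b u ≤ 0 := by
    rw [intervalIntegral.integral_symm, neg_nonpos]
    exact intervalIntegral.integral_nonneg (by linarith) fun u _ => hb0 u
  have htail : ∫ u in t..(t - θ), b u ≤ -θ * β := by
    have h := intervalIntegral.integral_mono_on (by linarith) (hb_int t (t - θ))
      intervalIntegrable_const fun u _ => hbβ u
    rwa [intervalIntegral.integral_const, smul_eq_mul, sub_sub_cancel_left] at h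
  rw [intervalIntegral.integral_comp_sub_right, zero_sub,
    ← intervalIntegral.integral_add_adjacent_intervals (hb_int (-θ) 0) (hb_int 0 (t - θ)),
    ← intervalIntegral.integral_add_adjacent_intervals (hb_int 0 t) (hb_int t (t - θ))]
  linarith

section DelayKernel

variable {v : Measure ℝ} [IsFiniteMeasure v] {τ α β t : ℝ} {a b : ℝ → ℝ}

theorem integrable_exp_mul_of_ae_mem_Icc (hv : ∀ᵐ θ ∂v, θ ∈ Icc (-τ) 0) :
    Integrable (fun θ => Real.exp (α * θ)) v := by
  rw [← Measure.restrict_eq_self_of_ae_mem hv]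
  exact (by fun_prop : Continuous _).integrableOn_Icc

theorem integral_mul_exp_neg_integral_le (hv : ∀ᵐ θ ∂v, θ ∈ Icc (-τ) 0)
    (hb_meas : Measurable b) (hb0 : ∀ r, 0 ≤ b r) (hbβ : ∀ r, b r ≤ β)
    (ha_int : ∀ x y, IntervalIntegrable a volume x y) (ha : ∀ r, α ≤ a r) (s : ℝ) :
    ∫ θ, b (s - θ) * Real.exp (-∫ r in s..(s - θ), a r) ∂v
      ≤ ∫ θ, b (s - θ) * Real.exp (α * θ) ∂v := by
  have hb_norm (θ : ℝ) : ‖b (s - θ)‖ ≤ β := by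
    rw [Real.norm_of_nonneg (hb0 _)]; exact hbβ _
  refine integral_mono_of_nonneg (.of_forall fun θ => mul_nonneg (hb0 _) (Real.exp_pos _).le)
    ((integrable_exp_mul_of_ae_mem_Icc hv).bdd_mul
      (hb_meas.comp (measurable_const.sub measurable_id)).aestronglyMeasurable
      (.of_forall hb_norm))
    (hv.mono fun θ hθ => ?_)
  exact mul_le_mul_of_nonneg_left (exp_neg_integral_le_exp_mul hθ.2 (ha_int _ _) ha) (hb0 _)

theorem integral_exp_mul_mul_integral_comp_sub_le (hv : ∀ᵐ θ ∂v, θ ∈ Icc (-τ) 0)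
    (hb_int : ∀ x y, IntervalIntegrable b volume x y) (hb0 : ∀ r, 0 ≤ b r)
    (hbβ : ∀ r, b r ≤ β) (ht : 0 ≤ t) :
    ∫ θ, Real.exp (α * θ) * (∫ s in 0..t, b (s - θ)) ∂v
      ≤ (∫ θ, Real.exp (α * θ) ∂v) * (τ * β + ∫ s in 0..t, b s) := by
  have hβ : 0 ≤ β := (hb0 0).trans (hbβ 0)
  rw [← integral_mul_const]
  refine integral_mono_of_nonneg (.of_forall fun θ => ?_)
    ((integrable_exp_mul_of_ae_mem_Icc hv).mul_const _) (hv.mono fun θ hθ => ?_)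
  · exact mul_nonneg (Real.exp_pos _).le (intervalIntegral.integral_nonneg ht fun s _ => hb0 _)
  · have hshift := intervalIntegral_comp_sub_le (t := t) hb_int hb0 hbβ hθ.2
    have hdelay : -θ * β ≤ τ * β := mul_le_mul_of_nonneg_right (by linarith [hθ.1]) hβ
    exact mul_le_mul_of_nonneg_left (by linarith) (Real.exp_pos _).le

end DelayKernel

theorem stmt_9_general (τ : ℝ) (hτ : 0 < τ) (v : Measure ℝ) [IsProbabilityMeasure v]
    (hv : v (Set.Icc (-τ) 0)ᶜ = 0)
    (alphaHat betaCheck : ℝ) (hbetaCheck : 0 ≤ betaCheck) (a b : ℝ → ℝ)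
    (hb_meas : Measurable b)
    (ha_int : ∀ s t : ℝ, IntervalIntegrable a MeasureTheory.volume s t)
    (hb_int : ∀ s t : ℝ, IntervalIntegrable b MeasureTheory.volume s t)
    (ha : ∀ r : ℝ, alphaHat ≤ a r) (hb : ∀ r : ℝ, 0 ≤ b r ∧ b r ≤ betaCheck)
    (t : ℝ) (ht : 0 ≤ t) :
    (∫ s in (0 : ℝ)..t, ∫ θ, b (s - θ) * Real.exp (-∫ r in s..(s - θ), a r) ∂v)
      ≤ τ * betaCheck * Real.exp (|alphaHat| * τ)
        + (∫ θ, Real.exp (alphaHat * θ) ∂v) * ∫ s in (0 : ℝ)..t, b s := by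
  have hvae : ∀ᵐ θ ∂v, θ ∈ Icc (-τ) 0 := mem_ae_iff.2 hv
  have : IsFiniteMeasure (volume.restrict (uIoc 0 t)) :=
    isFiniteMeasure_restrict.2 measure_Ioc_lt_top.ne
  set g : ℝ → ℝ → ℝ := fun s θ => b (s - θ) * Real.exp (alphaHat * θ)
  have hg_int : Integrable (uncurry g) ((volume.restrict (uIoc 0 t)).prod v) :=
    ((integrable_exp_mul_of_ae_mem_Icc hvae).comp_snd _).bdd_mul
      (hb_meas.comp (measurable_fst.sub measurable_snd)).aestronglyMeasurable
      (.of_forall fun p => by rw [Real.norm_of_nonneg (hb _).1]; exact (hb _).2)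
  calc _ ≤ ∫ s in (0 : ℝ)..t, ∫ θ, g s θ ∂v :=
        intervalIntegral_mono_of_nonneg ht
          (fun s => integral_nonneg fun θ => mul_nonneg (hb _).1 (Real.exp_pos _).le)
          (intervalIntegrable_iff.2 hg_int.integral_prod_left)
          (integral_mul_exp_neg_integral_le hvae hb_meas (fun r => (hb r).1) (fun r => (hb r).2)
            ha_int ha)
    _ = ∫ θ, (∫ s in (0 : ℝ)..t, g s θ) ∂v := intervalIntegral_integral_swap hg_int
    _ = ∫ θ, Real.exp (alphaHat * θ) * (∫ s in (0 : ℝ)..t, b (s - θ)) ∂v := by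
        simp only [g, intervalIntegral.integral_mul_const, mul_comm]
    _ ≤ (∫ θ, Real.exp (alphaHat * θ) ∂v) * (τ * betaCheck + ∫ s in (0 : ℝ)..t, b s) :=
        integral_exp_mul_mul_integral_comp_sub_le hvae hb_int (fun r => (hb r).1)
          (fun r => (hb r).2) ht
    _ ≤ _ := by
        have hexp_le := mul_le_mul_of_nonneg_right (integral_exp_mul_le (α := alphaHat) hvae)
          (by positivity : 0 ≤ τ * betaCheck)
        linarith

/-- Distributed-delay exponential-functional bound: for a probability measure v
on [−τ,0], a ≥ alphaHat and 0 ≤ β ≤ betaCheck locally integrable, for every t ≥ 0,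
∫_0^t ∫ β(s−θ)·exp(−∫_s^{s−θ} a) v(dθ) ds
  ≤ τ·betaCheck·e^{|alphaHat|τ} + (∫ e^{alphaHatθ} v(dθ))·∫_0^t β(s) ds. -/
theorem stmt_9 (τ : ℝ) (hτ : 0 < τ) (v : Measure ℝ) [IsProbabilityMeasure v]
    (hv : v (Set.Icc (-τ) 0)ᶜ = 0)
    (alphaHat betaCheck : ℝ) (hbetaCheck : 0 ≤ betaCheck) (a b : ℝ → ℝ)
    (ha_meas : Measurable a) (hb_meas : Measurable b)
    (ha_int : ∀ s t : ℝ, IntervalIntegrable a MeasureTheory.volume s t)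
    (hb_int : ∀ s t : ℝ, IntervalIntegrable b MeasureTheory.volume s t)
    (ha : ∀ r : ℝ, alphaHat ≤ a r) (hb : ∀ r : ℝ, 0 ≤ b r ∧ b r ≤ betaCheck)
    (t : ℝ) (ht : 0 ≤ t) :
    (∫ s in (0 : ℝ)..t, ∫ θ, b (s - θ) * Real.exp (-∫ r in s..(s - θ), a r) ∂v)
      ≤ τ * betaCheck * Real.exp (|alphaHat| * τ)
        + (∫ θ, Real.exp (alphaHat * θ) ∂v) * ∫ s in (0 : ℝ)..t, b s :=
  stmt_9_general τ hτ v hv alphaHat betaCheck hbetaCheck a b hb_meas ha_int hb_int ha hb t ht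
end
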